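/- Let φ be an n × n complex matrix, let s be a Hermitian n × n complex matrix, and set g = exp(−s)·φ*·exp(s). Then Tr([φ, [g, s]]·s) = ‖[s, exp(s/2)·φ·exp(−s/2)]‖_F². -/

import Mathlib

/-!
Write `a = exp (s/2)`, `b = exp (-s/2)` and `ψ = a φ b`. Conjugation `X ↦ b X a` commutes with
`ad s` because `a`, `b` commute with `s`, so `[[g, s], s] = b² [[φᴴ, s], s] a²`. Invariance of the
trace form, `Tr ([A, B] C) = Tr (A [B, C])`, together with cyclicity turns the left side into
`Tr (ψ [[ψᴴ, s], s]) = Tr ([s, ψ] [ψᴴ, s])`, and `[ψᴴ, s] = [s, ψ]ᴴ` since `a`, `b`, `s` are Hermitian.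
-/

open Matrix

/-- The squared Frobenius norm of a complex matrix, associated with the Frobenius
inner product `⟨A, B⟩ = Tr (A Bᴴ)`, i.e. `‖A‖_F² = Re (Tr (A Aᴴ))`. -/
noncomputable def frobSq {n : ℕ} (A : Matrix (Fin n) (Fin n) ℂ) : ℝ :=
  ((A * Aᴴ).trace).re

lemma ofReal_frobSq {n : ℕ} (A : Matrix (Fin n) (Fin n) ℂ) :
    (frobSq A : ℂ) = (A * Aᴴ).trace := by
  rw [frobSq, ← Complex.conj_eq_iff_re, starRingEnd_apply, ← trace_conjTranspose,
    conjTranspose_mul, conjTranspose_conjTranspose]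

lemma Matrix.trace_commutator_mul {m R : Type*} [Fintype m] [CommRing R]
    (A B C : Matrix m m R) :
    ((A * B - B * A) * C).trace = (A * (B * C - C * B)).trace := by
  simp only [sub_mul, mul_sub, trace_sub, mul_assoc, trace_mul_comm B (A * C)]

lemma Commute.mul_commutator_mul {R : Type*} [Ring R] {a b s : R} (ha : Commute a s)
    (hb : Commute b s) (x : R) :
    b * (x * s - s * x) * a = b * x * a * s - s * (b * x * a) := by
  simp only [mul_sub, sub_mul, mul_assoc, ha.eq, hb.left_comm]

lemma Matrix.IsHermitian.exp_smul {m 𝕜 : Type*} [Fintype m] [DecidableEq m] [RCLike 𝕜]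
    {A : Matrix m m 𝕜} (hA : A.IsHermitian) {c : 𝕜} (hc : IsSelfAdjoint c) :
    (NormedSpace.exp (c • A)).IsHermitian :=
  (hA.smul hc).exp

lemma Matrix.exp_smul_mul_exp_smul {m 𝕜 : Type*} [Fintype m] [DecidableEq m] [RCLike 𝕜]
    (A : Matrix m m 𝕜) (c d : 𝕜) :
    NormedSpace.exp (c • A) * NormedSpace.exp (d • A) = NormedSpace.exp ((c + d) • A) := by
  rw [add_smul, exp_add_of_commute _ _ (((Commute.refl A).smul_left c).smul_right d)]

/-- let `φ` be an `n × n` complex matrix, `s` a Hermitian `n × n`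
complex matrix, and `g = exp(−s)·φᴴ·exp(s)`.  Then
`Tr([φ, [g, s]]·s) = ‖[s, exp(s/2)·φ·exp(−s/2)]‖_F²`. -/
theorem trace_double_comm_eq_frobSq {n : ℕ}
    (φ s g : Matrix (Fin n) (Fin n) ℂ) (hs : s.IsHermitian)
    (hg : g = NormedSpace.exp (-s) * φᴴ * NormedSpace.exp s) :
    ((φ * (g * s - s * g) - (g * s - s * g) * φ) * s).trace =
      ((frobSq
        (s * (NormedSpace.exp ((2⁻¹ : ℂ) • s) * φ * NormedSpace.exp ((-(2⁻¹ : ℂ)) • s)) -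
          (NormedSpace.exp ((2⁻¹ : ℂ) • s) * φ * NormedSpace.exp ((-(2⁻¹ : ℂ)) • s)) * s)) :
        ℂ) := by
  set a := NormedSpace.exp ((2⁻¹ : ℂ) • s)
  set b := NormedSpace.exp ((-(2⁻¹ : ℂ)) • s)
  set ψ := a * φ * b
  have ha : Commute a s := ((Commute.refl s).smul_right _).exp_right.symm
  have hb : Commute b s := ((Commute.refl s).smul_right _).exp_right.symm
  have haa : a * a = NormedSpace.exp s := by rw [exp_smul_mul_exp_smul]; norm_num
  have hbb : b * b = NormedSpace.exp (-s) := by rw [exp_smul_mul_exp_smul]; norm_num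
  have haH : aᴴ = a := (hs.exp_smul (by simp [IsSelfAdjoint])).eq
  have hbH : bᴴ = b := (hs.exp_smul (by simp [IsSelfAdjoint])).eq
  have hψ : ψᴴ = b * φᴴ * a := by simp only [ψ, conjTranspose_mul, haH, hbH, mul_assoc]
  calc ((φ * (g * s - s * g) - (g * s - s * g) * φ) * s).trace
      = (φ * ((g * s - s * g) * s - s * (g * s - s * g))).trace := trace_commutator_mul _ _ _
    _ = (φ * (b * b * ((φᴴ * s - s * φᴴ) * s - s * (φᴴ * s - s * φᴴ)) * (a * a))).trace := by
      rw [(ha.mul_left ha).mul_commutator_mul (hb.mul_left hb),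
        (ha.mul_left ha).mul_commutator_mul (hb.mul_left hb), hg, haa, hbb]
    _ = (ψ * (b * ((φᴴ * s - s * φᴴ) * s - s * (φᴴ * s - s * φᴴ)) * a)).trace := by
      simp only [ψ, mul_assoc]
      rw [trace_mul_comm a]
      simp only [mul_assoc]
    _ = (ψ * ((ψᴴ * s - s * ψᴴ) * s - s * (ψᴴ * s - s * ψᴴ))).trace := by
      rw [ha.mul_commutator_mul hb, ha.mul_commutator_mul hb, hψ]
    _ = ((s * ψ - ψ * s) * (ψᴴ * s - s * ψᴴ)).trace := by
      rw [trace_mul_comm ψ, trace_commutator_mul, trace_mul_comm]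
    _ = ((s * ψ - ψ * s) * (s * ψ - ψ * s)ᴴ).trace := by
      simp only [conjTranspose_sub, conjTranspose_mul, hs.eq]
    _ = frobSq (s * ψ - ψ * s) := (ofReal_frobSq _).symm
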